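/- Let A ∈ ℂ^{n×n} be normal and suppose there is a polynomial p_d of degree ≤ d with |f(z) − p_d(z)| ≤ ε on the spectrum of A. Let f(A)^[d] be the probing approximation built from a distance-2d coloring of |G(A)|, and suppose the probing approximation is exact for p_d(A), i.e. p_d(A)^[d] = p_d(A). Then ‖f(A) − f(A)^[d]‖_F ≤ 2√n·ε. -/

import Mathlib

/-!
Write `E = f(A) - p(A) = U diag(f(λ) - p(λ)) Uᴴ`, so `‖E‖₂ ≤ ε`. Probing is linear and exact for
`p(A)`, hence `f(A) - f(A)^[d] = E - E^[d]`. Row `i` of `E^[d]` only keeps entries `j` in the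
`d`-ball around `i`, on which the distance-`2d` colouring is injective, so each entry `(E v_ℓ)_i`
appears at most once: `‖E^[d]‖_F² ≤ ∑_ℓ ‖E v_ℓ‖² ≤ ε² ∑_ℓ ‖v_ℓ‖² = n ε²`. The same estimate with
the colouring by singletons gives `‖E‖_F² ≤ n ε²`, and the triangle inequality concludes.
-/

open Finset Matrix

namespace Matrix

theorem aeval_unitary_mul_diagonal_mul_star {n R : Type*} [Fintype n] [DecidableEq n]
    [CommRing R] [StarRing R] {U : Matrix n n R} (hU : U ∈ unitaryGroup n R)
    (lam : n → R) (p : Polynomial R) :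
    Polynomial.aeval (U * diagonal lam * star U) p
      = U * diagonal (fun i => p.eval (lam i)) * star U := by
  have h := Polynomial.aeval_algHom_apply
    ((Unitary.conjStarAlgAut R (Matrix n n R) ⟨U, hU⟩ : Matrix n n R →ₐ[R] Matrix n n R).comp
      (diagonalAlgHom R)) lam p
  simpa [Polynomial.aeval_pi_apply] using h

theorem sqrt_sum_sum_norm_sq_sub_le {m n α : Type*} [Fintype m] [Fintype n]
    [NormedAddCommGroup α] (A B : Matrix m n α) :
    √(∑ i, ∑ j, ‖(A - B) i j‖ ^ 2) ≤ √(∑ i, ∑ j, ‖A i j‖ ^ 2) + √(∑ i, ∑ j, ‖B i j‖ ^ 2) := by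
  let _ := frobeniusNormedAddCommGroup (m := m) (n := n) (α := α)
  have hfrob (C : Matrix m n α) : √(∑ i, ∑ j, ‖C i j‖ ^ 2) = ‖C‖ := by
    simp only [frobenius_norm_def, Real.sqrt_eq_rpow, Real.rpow_two]
  simp only [hfrob]
  exact norm_sub_le A B

section L2

open scoped Matrix.Norms.L2Operator

variable {𝕜 n : Type*} [RCLike 𝕜] [Fintype n] [DecidableEq n]

theorem l2_opNorm_unitary_mul_diagonal_mul_star {U : Matrix n n 𝕜}
    (hU : U ∈ unitaryGroup n 𝕜) (g : n → 𝕜) :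
    ‖U * diagonal g * star U‖ = ‖g‖ := by
  rw [CStarRing.norm_mul_mem_unitary _ (Unitary.star_mem hU),
    CStarRing.norm_mem_unitary_mul _ hU, l2_opNorm_diagonal]

theorem sum_norm_sq_mulVec_le {B : Matrix n n 𝕜} {ε : ℝ} (hB : ‖B‖ ≤ ε) (x : n → 𝕜) :
    ∑ i, ‖(B *ᵥ x) i‖ ^ 2 ≤ ε ^ 2 * ∑ i, ‖x i‖ ^ 2 := by
  have h : ‖(EuclideanSpace.equiv n 𝕜).symm (B *ᵥ x)‖ ≤ ε * ‖WithLp.toLp 2 x‖ :=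
    (l2_opNorm_mulVec B _).trans (mul_le_mul_of_nonneg_right hB (norm_nonneg _))
  have h2 := pow_le_pow_left₀ (norm_nonneg _) h 2
  rwa [mul_pow, EuclideanSpace.norm_sq_eq, EuclideanSpace.norm_sq_eq] at h2

end L2

end Matrix

theorem SimpleGraph.injOn_setOf_edist_le {V κ : Type*} {G : SimpleGraph V} {c : V → κ} {d : ℕ}
    (hc : ∀ i j, i ≠ j → c i = c j → (2 * d : ℕ) < G.edist i j) (i : V) :
    Set.InjOn c {j | G.edist i j ≤ d} := by
  intro a ha b hb hab
  by_contra hne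
  refine (hc a b hne hab).not_ge ?_
  calc G.edist a b ≤ G.edist a i + G.edist i b := G.edist_triangle
    _ ≤ d + d := add_le_add (G.edist_comm ▸ ha) hb
    _ = (2 * d : ℕ) := by push_cast; ring

section Probing

variable {V κ 𝕜 : Type*} [Fintype V] [DecidableEq κ]

def probingVector [Zero 𝕜] [One 𝕜] (c : V → κ) (ℓ : κ) : V → 𝕜 :=
  fun k => if c k = ℓ then 1 else 0

theorem mulVec_probingVector_apply [Semiring 𝕜] (B : Matrix V V 𝕜) (c : V → κ) (ℓ : κ)
    (i : V) : (B *ᵥ probingVector c ℓ) i = ∑ k ∈ univ.filter (fun k => c k = ℓ), B i k := by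
  simp [mulVec, dotProduct, probingVector, sum_filter]

/-- The probing approximation `B^[d]`, with probing vectors `v_ℓ = probingVector c ℓ`. -/
noncomputable def probing [Semiring 𝕜] (G : SimpleGraph V) (c : V → κ) (d : ℕ)
    (B : Matrix V V 𝕜) : Matrix V V 𝕜 :=
  of fun i j => if G.edist i j ≤ d then (B *ᵥ probingVector c (c j)) i else 0

theorem probing_sub [Ring 𝕜] (G : SimpleGraph V) (c : V → κ) (d : ℕ) (A B : Matrix V V 𝕜) :
    probing G c d (A - B) = probing G c d A - probing G c d B := by
  ext i j
  by_cases h : G.edist i j ≤ d <;> simp [probing, h, sub_mulVec]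

theorem sum_sum_norm_sq_probing_le [NormedRing 𝕜] [Fintype κ] (G : SimpleGraph V) {c : V → κ}
    {d : ℕ} (hc : ∀ i, Set.InjOn c {j | G.edist i j ≤ d}) (B : Matrix V V 𝕜) :
    ∑ i, ∑ j, ‖probing G c d B i j‖ ^ 2 ≤ ∑ ℓ, ∑ i, ‖(B *ᵥ probingVector c ℓ) i‖ ^ 2 := by
  rw [sum_comm (s := (univ : Finset κ))]
  refine sum_le_sum fun i _ => ?_
  set ball := univ.filter fun j => G.edist i j ≤ d
  calc ∑ j, ‖probing G c d B i j‖ ^ 2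
      = ∑ j ∈ ball, ‖(B *ᵥ probingVector c (c j)) i‖ ^ 2 := by
        rw [sum_filter]
        refine sum_congr rfl fun j _ => ?_
        by_cases h : G.edist i j ≤ d <;> simp [probing, h]
    _ = ∑ ℓ ∈ ball.image c, ‖(B *ᵥ probingVector c ℓ) i‖ ^ 2 := by
        rw [sum_image]
        intro a ha b hb
        exact hc i (mem_filter.1 ha).2 (mem_filter.1 hb).2
    _ ≤ ∑ ℓ, ‖(B *ᵥ probingVector c ℓ) i‖ ^ 2 :=
        sum_le_sum_of_subset_of_nonneg (subset_univ _) fun _ _ _ => by positivity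

section L2

open scoped Matrix.Norms.L2Operator

variable [RCLike 𝕜] [DecidableEq V] [Fintype κ]

theorem sum_sum_norm_sq_mulVec_probingVector_le {B : Matrix V V 𝕜} {ε : ℝ} (hB : ‖B‖ ≤ ε)
    (c : V → κ) :
    ∑ ℓ, ∑ i, ‖(B *ᵥ probingVector c ℓ) i‖ ^ 2 ≤ Fintype.card V * ε ^ 2 := by
  have hv (ℓ : κ) :
      ∑ k, ‖(probingVector c ℓ k : 𝕜)‖ ^ 2 = #(univ.filter fun k => c k = ℓ) := by
    simp [probingVector, apply_ite]
  calc ∑ ℓ, ∑ i, ‖(B *ᵥ probingVector c ℓ) i‖ ^ 2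
      ≤ ∑ ℓ, ε ^ 2 * ∑ k, ‖(probingVector c ℓ k : 𝕜)‖ ^ 2 :=
        sum_le_sum fun ℓ _ => Matrix.sum_norm_sq_mulVec_le hB _
    _ = Fintype.card V * ε ^ 2 := by
        simp_rw [hv, ← mul_sum]
        rw [← Nat.cast_sum, ← card_eq_sum_card_fiberwise fun _ _ => mem_univ _, card_univ]
        ring

theorem sum_sum_norm_sq_le_of_l2_opNorm_le {B : Matrix V V 𝕜} {ε : ℝ} (hB : ‖B‖ ≤ ε) :
    ∑ i, ∑ j, ‖B i j‖ ^ 2 ≤ Fintype.card V * ε ^ 2 := by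
  have h := sum_sum_norm_sq_mulVec_probingVector_le hB id
  simp only [mulVec_probingVector_apply, id, filter_eq', mem_univ, if_true, sum_singleton] at h
  rwa [sum_comm]

end L2

end Probing

theorem probing_sparse_poly_approx_general (n m d : ℕ) (A : Matrix (Fin n) (Fin n) ℂ)
    (f : ℂ → ℂ) (F : Matrix (Fin n) (Fin n) ℂ)
    (U : Matrix (Fin n) (Fin n) ℂ) (hU : U ∈ Matrix.unitaryGroup (Fin n) ℂ)
    (lam : Fin n → ℂ)
    (hA : A = U * Matrix.diagonal lam * star U)
    (hF : F = U * Matrix.diagonal (fun i => f (lam i)) * star U)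
    (p : Polynomial ℂ)
    (ε : ℝ) (hε : 0 ≤ ε)
    (happrox : ∀ i : Fin n, ‖f (lam i) - p.eval (lam i)‖ ≤ ε)
    (G : SimpleGraph (Fin n))
    (col : Fin n → Fin m)
    (hcolor : ∀ i j : Fin n, i ≠ j → col i = col j → (2 * d : ℕ) < G.edist i j)
    (Fd Pd : Matrix (Fin n) (Fin n) ℂ)
    (hFd : ∀ i j : Fin n, Fd i j =
      if G.edist i j ≤ (d : ℕ∞) then
        ∑ k ∈ Finset.univ.filter (fun k => col k = col j), F i k
      else 0)
    (hPd : ∀ i j : Fin n, Pd i j =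
      if G.edist i j ≤ (d : ℕ∞) then
        ∑ k ∈ Finset.univ.filter (fun k => col k = col j), (Polynomial.aeval A p) i k
      else 0)
    (hexact : Pd = Polynomial.aeval A p) :
    Real.sqrt (∑ i, ∑ j, ‖F i j - Fd i j‖ ^ 2) ≤
      2 * Real.sqrt n * ε := by
  set E := F - Polynomial.aeval A p with hEdef
  have hE : E = U * diagonal (fun i => f (lam i) - p.eval (lam i)) * star U := by
    rw [hEdef, hF, hA, aeval_unitary_mul_diagonal_mul_star hU, ← sub_mul, ← mul_sub, diagonal_sub]
  have hEnorm := (l2_opNorm_unitary_mul_diagonal_mul_star hU _).le.trans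
    ((pi_norm_le_iff_of_nonneg hε).2 happrox)
  rw [← hE] at hEnorm
  have hprobing {B X : Matrix (Fin n) (Fin n) ℂ} (hX : ∀ i j, X i j =
      if G.edist i j ≤ d then ∑ k ∈ univ.filter (fun k => col k = col j), B i k else 0) :
      X = probing G col d B := by
    ext i j
    simp [hX, probing, mulVec_probingVector_apply]
  have hsub : F - Fd = E - probing G col d E := by
    rw [hEdef, probing_sub, ← hprobing hFd, ← hprobing (hexact ▸ hPd), sub_sub_sub_cancel_right]
  have hn : √(Fintype.card (Fin n) * ε ^ 2) = √n * ε := by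
    rw [Fintype.card_fin, Real.sqrt_mul (Nat.cast_nonneg n), Real.sqrt_sq hε]
  calc √(∑ i, ∑ j, ‖F i j - Fd i j‖ ^ 2)
      = √(∑ i, ∑ j, ‖(E - probing G col d E) i j‖ ^ 2) := by rw [← hsub]; rfl
    _ ≤ √(∑ i, ∑ j, ‖E i j‖ ^ 2) + √(∑ i, ∑ j, ‖probing G col d E i j‖ ^ 2) :=
        sqrt_sum_sum_norm_sq_sub_le _ _
    _ ≤ √n * ε + √n * ε := by
        rw [← hn]
        gcongr
        · exact sum_sum_norm_sq_le_of_l2_opNorm_le hEnorm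
        · exact (sum_sum_norm_sq_probing_le G (G.injOn_setOf_edist_le hcolor) E).trans
            (sum_sum_norm_sq_mulVec_probingVector_le hEnorm col)
    _ = 2 * √n * ε := by ring

/-- Let `A ∈ ℂ^{n×n}` be normal, with spectral decomposition
`A = U·diag(λ)·Uᴴ` (`U` unitary) and `f(A) = U·diag(f∘λ)·Uᴴ`. Suppose there is
a polynomial `p` of degree `≤ d` with `|f(λᵢ) − p(λᵢ)| ≤ ε` on the spectrum of
`A`. Let `F^[d]` be the probing approximation of `F = f(A)` built from a
distance-`2d` coloring of the undirected graph `|G(A)|` (classes are the fibers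
of `col`), keeping `[F v_ℓ]_i` when `d̄(i,j) ≤ d` (with `j ∈ V_ℓ`) and `0`
otherwise, and suppose the analogous probing approximation of `p(A)` is exact,
i.e. `p(A)^[d] = p(A)`. Then `‖F − F^[d]‖_F ≤ 2√n·ε`. -/
theorem probing_sparse_poly_approx (n m d : ℕ) (A : Matrix (Fin n) (Fin n) ℂ)
    (f : ℂ → ℂ) (F : Matrix (Fin n) (Fin n) ℂ)
    (U : Matrix (Fin n) (Fin n) ℂ) (hU : U ∈ Matrix.unitaryGroup (Fin n) ℂ)
    (lam : Fin n → ℂ)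
    (hA : A = U * Matrix.diagonal lam * star U)
    (hF : F = U * Matrix.diagonal (fun i => f (lam i)) * star U)
    (p : Polynomial ℂ) (hdeg : p.natDegree ≤ d)
    (ε : ℝ) (hε : 0 ≤ ε)
    (happrox : ∀ i : Fin n, ‖f (lam i) - p.eval (lam i)‖ ≤ ε)
    (G : SimpleGraph (Fin n))
    (hG : ∀ i j : Fin n, G.Adj i j ↔ i ≠ j ∧ (A i j ≠ 0 ∨ A j i ≠ 0))
    (col : Fin n → Fin m)
    (hcolor : ∀ i j : Fin n, i ≠ j → col i = col j → (2 * d : ℕ) < G.edist i j)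
    (Fd Pd : Matrix (Fin n) (Fin n) ℂ)
    (hFd : ∀ i j : Fin n, Fd i j =
      if G.edist i j ≤ (d : ℕ∞) then
        ∑ k ∈ Finset.univ.filter (fun k => col k = col j), F i k
      else 0)
    (hPd : ∀ i j : Fin n, Pd i j =
      if G.edist i j ≤ (d : ℕ∞) then
        ∑ k ∈ Finset.univ.filter (fun k => col k = col j), (Polynomial.aeval A p) i k
      else 0)
    (hexact : Pd = Polynomial.aeval A p) :
    Real.sqrt (∑ i, ∑ j, ‖F i j - Fd i j‖ ^ 2) ≤
      2 * Real.sqrt n * ε :=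
  probing_sparse_poly_approx_general n m d A f F U hU lam hA hF p ε hε happrox G col hcolor Fd Pd
    hFd hPd hexact
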